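/- arXiv:1706.03035 — 2 statements merged into one kernel-verified Lean document; each statement's English description precedes it below -/
import Mathlib

section
/- For any integer j with 1 ≤ j, the xorshift operation xs_{w,j}(x) = x XOR (2^j · x mod 2^w), restricted to [0..2^w − 1], satisfies xs_{w,j}(xs_{w,j}(x)) = x whenever 2j ≥ w, i.e., the function is an involution (self-inverse) on [0..2^w − 1]. -/
/-! Write `s y = 2^j·y mod 2^w` for the truncated shift, so that `xs y = y ⊕ s y` on `[0, 2^w)`.
The map `s` is linear over `⊕`, and `s ∘ s` is multiplication by `2^(2j)` modulo `2^w`, which vanishes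
when `2j ≥ w`. Hence `xs (xs x) = x ⊕ s x ⊕ s x ⊕ s (s x) = x`. -/

namespace Nat

theorem two_pow_mul_xor_mod_two_pow (w j a b : ℕ) :
    2 ^ j * (a ^^^ b) % 2 ^ w = 2 ^ j * a % 2 ^ w ^^^ 2 ^ j * b % 2 ^ w := by
  simp only [mul_comm (2 ^ j), ← shiftLeft_eq, shiftLeft_xor_distrib, xor_mod_two_pow]

theorem two_pow_mul_two_pow_mul_mod_two_pow_eq_zero {w j : ℕ} (h : w ≤ 2 * j) (a : ℕ) :
    2 ^ j * (2 ^ j * a % 2 ^ w) % 2 ^ w = 0 := by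
  rw [mul_mod, mod_mod, ← mul_mod, ← mul_assoc, ← pow_add, ← two_mul]
  exact mod_eq_zero_of_dvd (Dvd.dvd.mul_right (pow_dvd_pow 2 h) a)

end Nat

theorem xorshift_involution_general (w j : ℕ) (hj1 : w / 2 < j)
    (x : ℕ) (hx : x < 2 ^ w) :
    (((x ^^^ (2 ^ j * x % 2 ^ w)) % 2 ^ w) ^^^
      (2 ^ j * ((x ^^^ (2 ^ j * x % 2 ^ w)) % 2 ^ w) % 2 ^ w)) % 2 ^ w = x := by
  have hw : w ≤ 2 * j := by omega
  have hxs : x ^^^ 2 ^ j * x % 2 ^ w < 2 ^ w :=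
    Nat.xor_lt_two_pow hx (Nat.mod_lt _ (Nat.two_pow_pos w))
  rw [Nat.mod_eq_of_lt hxs, Nat.two_pow_mul_xor_mod_two_pow,
    Nat.two_pow_mul_two_pow_mul_mod_two_pow_eq_zero hw, Nat.xor_zero, Nat.xor_assoc, Nat.xor_self,
    Nat.xor_zero, Nat.mod_eq_of_lt hx]

/-- The xorshift operation `xs_{w,j}(x) = (x XOR (2^j·x mod 2^w)) mod 2^w` is an
involution on `[0..2^w - 1]` when `⌊w/2⌋ < j < w` (so that `2j ≥ w`). -/
theorem xorshift_involution (w j : ℕ) (hj1 : w / 2 < j) (hj2 : j < w)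
    (x : ℕ) (hx : x < 2 ^ w) :
    (((x ^^^ (2 ^ j * x % 2 ^ w)) % 2 ^ w) ^^^
      (2 ^ j * ((x ^^^ (2 ^ j * x % 2 ^ w)) % 2 ^ w) % 2 ^ w)) % 2 ^ w = x :=
  xorshift_involution_general w j hj1 x hx
end

section
/- If a string T of length n over an alphabet of size σ ≥ 2 has LZ78 factorization with z factors, and z' factors covering the first n − r characters have already been produced, then the number of remaining factors satisfies z − z' ≤ c·r/log_σ r for an absolute constant c > 0 (for r ≥ σ). -/
/-!
An LZ78 factor other than the last one cannot equal an earlier factor, since the earlier factor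
would then be a longer previous factor that is a prefix of the remaining suffix. So all but one
of the remaining factors are distinct words over `σ` letters whose total length is at most `r`.
With `L = ⌊log_σ r / 2⌋`, at most `(L + 1) σ^L ≤ (L + 1) √r` of them have length at most `L`,
and at most `r / (L + 1)` are longer; both counts are `O(r / log_σ r)`.
-/

/-- `F` is an LZ78 factorization of `T`: the factors concatenate to `T`, and each
factor extends the longest previously seen factor (or the empty string) that is a
prefix of the remaining suffix by one character.  The last factor is allowed to be
exactly a previous factor (no extending character). -/
def IsLZ78 {α : Type*} (T : List α) (F : List (List α)) : Prop :=
  F.flatten = T ∧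
  ∀ i (hi : i < F.length),
    ∃ prev ∈ ([] :: F.take i),
      ((∃ c : α, F.get ⟨i, hi⟩ = prev ++ [c]) ∨
        (i = F.length - 1 ∧ prev ≠ [] ∧ F.get ⟨i, hi⟩ = prev)) ∧
      ∀ S ∈ ([] :: F.take i), S <+: (F.drop i).flatten → S.length ≤ prev.length

namespace IsLZ78

variable {α : Type*} {T : List α} {F : List (List α)}

theorem getElem_ne_of_lt (h : IsLZ78 T F) {i j : ℕ} (hij : i < j) (hj : j + 1 < F.length) :
    F[j] ≠ F[i] := by
  intro heq
  obtain ⟨prev, -, hcase, hlongest⟩ := h.2 j (by omega)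
  obtain ⟨c, hc⟩ : ∃ c, F[j] = prev ++ [c] := by
    rcases hcase with hc | ⟨hlast, -⟩
    · exact hc
    · omega
  have hearlier : F[i] ∈ [] :: F.take j := by
    refine List.mem_cons_of_mem _ (List.mem_iff_getElem.2 ⟨i, ?_, List.getElem_take⟩)
    simp only [List.length_take, lt_inf_iff]
    omega
  have hprefix : F[i] <+: (F.drop j).flatten := by
    rw [← heq, List.drop_eq_getElem_cons (by omega), List.flatten_cons]
    exact List.prefix_append _ _
  have := hlongest _ hearlier hprefix
  rw [← heq, hc] at this
  simp at this

theorem nodup_dropLast (h : IsLZ78 T F) : F.dropLast.Nodup :=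
  List.pairwise_iff_getElem.2 fun i j hi hj hij => by
    simp only [List.getElem_dropLast, List.length_dropLast] at hj ⊢
    exact (h.getElem_ne_of_lt hij (by omega)).symm

end IsLZ78

namespace Real

theorem one_le_logb {b x : ℝ} (hb : 1 < b) (hbx : b ≤ x) : 1 ≤ logb b x := by
  rw [le_logb_iff_rpow_le hb (by linarith), rpow_one]
  exact hbx

theorem logb_sq_le_sqrt {σ r : ℝ} (hσ : 2 ≤ σ) (hr : 1 ≤ r) : logb σ r ^ 2 ≤ 36 * √r := by
  set q := r ^ (1 / 4 : ℝ)
  have hq : q ^ 2 = √r := by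
    rw [sqrt_eq_rpow, ← rpow_natCast, ← rpow_mul (by linarith)]
    norm_num
  have hlog_r : log r ≤ 4 * q := by
    have := log_le_rpow_div (x := r) (by linarith) (ε := 1 / 4) (by norm_num)
    rwa [div_eq_mul_inv, inv_div, div_one, mul_comm] at this
  have hlog_σ : 2 / 3 < log σ :=
    (log_two_gt_d9.trans_le' (by norm_num)).trans_le (log_le_log (by norm_num) hσ)
  have hℓ : logb σ r ≤ 6 * q := by
    rw [logb, div_le_iff₀ (by linarith)]
    nlinarith [log_nonneg hr, rpow_nonneg (zero_le_one.trans hr) (1 / 4 : ℝ)]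
  have hℓ0 : 0 ≤ logb σ r := logb_nonneg (by linarith) hr
  nlinarith

theorem pow_floor_half_logb_le_sqrt {σ r : ℝ} (hσ : 1 < σ) (hr : 1 ≤ r) :
    σ ^ ⌊logb σ r / 2⌋₊ ≤ √r := by
  have hℓ0 : 0 ≤ logb σ r / 2 := by have := logb_nonneg hσ hr; positivity
  calc σ ^ ⌊logb σ r / 2⌋₊ = σ ^ (⌊logb σ r / 2⌋₊ : ℝ) := (rpow_natCast _ _).symm
    _ ≤ σ ^ (logb σ r / 2) := rpow_le_rpow_of_exponent_le hσ.le (Nat.floor_le hℓ0)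
    _ = √r := by
        rw [div_eq_mul_inv, rpow_mul (by linarith), rpow_logb (by linarith) hσ.ne' (by linarith),
          sqrt_eq_rpow, one_div]

end Real

section Words

open Real

variable {α : Type*}

theorem List.Nodup.length_filter_length_le [Fintype α] [Nonempty α] {G : List (List α)}
    (hG : G.Nodup) (L : ℕ) :
    (G.filter (·.length ≤ L)).length ≤ (L + 1) * Fintype.card α ^ L := by
  classical
  let short : Finset (List α) := (Finset.range (L + 1)).biUnion fun k =>
    (Finset.univ : Finset (List.Vector α k)).map ⟨List.Vector.toList, List.Vector.toList_injective⟩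
  have hsub : (G.filter (·.length ≤ L)).toFinset ⊆ short := by
    intro w hw
    simp only [List.mem_toFinset, List.mem_filter, decide_eq_true_eq] at hw
    simp only [short, Finset.mem_biUnion, Finset.mem_range, Finset.mem_map]
    exact ⟨w.length, by omega, ⟨w, rfl⟩, Finset.mem_univ _, rfl⟩
  calc (G.filter (·.length ≤ L)).length
      = (G.filter (·.length ≤ L)).toFinset.card := (List.toFinset_card_of_nodup (hG.filter _)).symm
    _ ≤ short.card := Finset.card_le_card hsub
    _ ≤ ∑ k ∈ Finset.range (L + 1), Fintype.card α ^ k := by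
        refine Finset.card_biUnion_le.trans (le_of_eq (Finset.sum_congr rfl fun k _ => ?_))
        rw [Finset.card_map, Finset.card_univ, card_vector]
    _ ≤ (L + 1) * Fintype.card α ^ L := by
        simpa using Finset.sum_le_card_nsmul _ _ _ fun k hk =>
          Nat.pow_le_pow_right Fintype.card_pos (Finset.mem_range_succ_iff.1 hk)

theorem List.length_filter_lt_length_mul_le (G : List (List α)) (L : ℕ) :
    (G.filter (L < ·.length)).length * (L + 1) ≤ G.flatten.length := by
  calc (G.filter (L < ·.length)).length * (L + 1)
      = ((G.filter (L < ·.length)).map List.length).length • (L + 1) := by simp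
    _ ≤ ((G.filter (L < ·.length)).map List.length).sum :=
        List.card_nsmul_le_sum _ _ fun x hx => by
          obtain ⟨w, hw, rfl⟩ := List.mem_map.1 hx
          simpa [Nat.succ_le_iff] using (List.mem_filter.1 hw).2
    _ ≤ G.flatten.length := by
        rw [← List.length_flatten]
        exact (List.filter_sublist.flatten).length_le

theorem List.Nodup.length_mul_logb_le [Fintype α] {G : List (List α)} (hG : G.Nodup)
    {r : ℕ} (hα : 2 ≤ Fintype.card α) (hαr : Fintype.card α ≤ r) (hr : G.flatten.length ≤ r) :
    G.length * logb (Fintype.card α) r ≤ 56 * r := by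
  have : Nonempty α := Fintype.card_pos_iff.1 (by omega)
  set σ := Fintype.card α
  set ℓ := logb σ r
  set L := ⌊ℓ / 2⌋₊
  have hσ : (2 : ℝ) ≤ σ := by exact_mod_cast hα
  have hσr : (σ : ℝ) ≤ r := by exact_mod_cast hαr
  have hℓ : 1 ≤ ℓ := one_le_logb (by linarith) hσr
  set A := (G.filter (·.length ≤ L)).length
  set B := (G.filter (L < ·.length)).length
  have hsplit : G.length = A + B := by
    rw [List.length_eq_length_filter_add (·.length ≤ L)]
    simp only [A, B, Nat.add_left_cancel_iff]
    congr with w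
    simp only [← decide_not, not_le]
  have hA : (A : ℝ) ≤ (L + 1) * σ ^ L := by exact_mod_cast hG.length_filter_length_le L
  have hB : (B : ℝ) * (L + 1) ≤ r := by
    exact_mod_cast (G.length_filter_lt_length_mul_le L).trans hr
  have hL : (L : ℝ) ≤ ℓ / 2 := Nat.floor_le (by linarith)
  have hL' : ℓ / 2 < L + 1 := Nat.lt_floor_add_one _
  have hshort : (A : ℝ) * ℓ ≤ 54 * r := calc
    (A : ℝ) * ℓ ≤ (3 / 2 * ℓ * √r) * ℓ := by
      gcongr
      exact hA.trans (mul_le_mul (by linarith) (pow_floor_half_logb_le_sqrt (by linarith)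
        (by linarith)) (by positivity) (by linarith))
    _ = 3 / 2 * √r * ℓ ^ 2 := by ring
    _ ≤ 3 / 2 * √r * (36 * √r) := by gcongr; exact logb_sq_le_sqrt hσ (by linarith)
    _ = 54 * r := by rw [mul_mul_mul_comm, mul_self_sqrt (by linarith)]; ring
  have hlong : (B : ℝ) * ℓ ≤ 2 * r := calc
    (B : ℝ) * ℓ ≤ B * (2 * (L + 1)) := by gcongr; linarith
    _ ≤ 2 * r := by linarith
  rw [hsplit, Nat.cast_add]
  linarith

end Words

open Real in
/-- If `z'` of the `z` LZ78 factors cover the first `n − r` characters, then the number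
of remaining factors satisfies `z − z' ≤ c·r / log_σ r` for an absolute constant
`c > 0` (for `r ≥ σ`). -/
theorem lz78_remaining_factors_bound :
    ∃ c : ℝ, 0 < c ∧
      ∀ (σ : ℕ), 2 ≤ σ →
        ∀ (T : List (Fin σ)) (F : List (List (Fin σ))), IsLZ78 T F →
          ∀ (z' r : ℕ), z' ≤ F.length →
            (F.take z').flatten.length = T.length - r →
            σ ≤ r →
            ((F.length - z' : ℕ) : ℝ) ≤ c * r / Real.logb σ r := by
  refine ⟨92, by norm_num, fun σ hσ T F hF z' r _ hcov hσr => ?_⟩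
  have hrest : (F.drop z').flatten.length ≤ r := by
    have := congrArg (·.flatten.length) (List.take_append_drop z' F)
    simp only [List.flatten_append, List.length_append, hF.1, hcov] at this
    omega
  have hnodup : (F.drop z').dropLast.Nodup := by
    rw [List.dropLast_drop_eq_drop_dropLast]
    exact hF.nodup_dropLast.sublist (List.drop_sublist _ _)
  have hcount : F.length - z' ≤ (F.drop z').dropLast.length + 1 := by
    simp only [List.length_dropLast, List.length_drop]
    omega
  have hbound := hnodup.length_mul_logb_le (by simpa) (by simpa)
    ((List.dropLast_sublist _).flatten.length_le.trans hrest)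
  have hσ' : (2 : ℝ) ≤ σ := by exact_mod_cast hσ
  have hσr' : (σ : ℝ) ≤ r := by exact_mod_cast hσr
  have hℓ : 1 ≤ logb σ r := one_le_logb (by linarith) hσr'
  have hℓr : logb σ r ≤ 36 * r := calc
    logb σ r ≤ logb σ r ^ 2 := by nlinarith
    _ ≤ 36 * √r := logb_sq_le_sqrt hσ' (by linarith)
    _ ≤ 36 * r := by gcongr; exact (sqrt_le_left (by linarith)).2 (by nlinarith)
  rw [le_div_iff₀ (by linarith)]
  simp only [Fintype.card_fin] at hbound
  calc ((F.length - z' : ℕ) : ℝ) * logb σ r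
      ≤ ((F.drop z').dropLast.length + 1) * logb σ r := by gcongr; exact_mod_cast hcount
    _ = (F.drop z').dropLast.length * logb σ r + logb σ r := by ring
    _ ≤ 92 * r := by linarith
end
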